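/- Let Σ, K, S be n×n real matrices such that I + ΣS and I + ΣS + KS are invertible. If vectors z_1,…,z_N and β_1,…,β_N in ℝ^n satisfy, for each i, β_i = (I + ΣS) z_i + (K/N) S ∑_{j=1}^N z_j (where K/N denotes (1/N)·K), then z_i = (I + ΣS)^{-1} β_i − (1/N)(I + ΣS)^{-1} K S (I + ΣS + KS)^{-1} ∑_{j=1}^N β_j. -/
import Mathlib


open Matrix

/-- Explicit solution of the linear system
`βᵢ = (I + ΣS) zᵢ + (K/N) S ∑ⱼ zⱼ` arising from the decoupling procedure. -/
theorem stmt_5 {n N : ℕ} (Sg K S : Matrix (Fin n) (Fin n) ℝ)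
    (h₁ : IsUnit (1 + Sg * S)) (h₂ : IsUnit (1 + Sg * S + K * S))
    (z β : Fin N → (Fin n → ℝ))
    (h : ∀ i, β i =
      (1 + Sg * S) *ᵥ z i + ((N : ℝ)⁻¹ • K) *ᵥ (S *ᵥ ∑ j, z j)) :
    ∀ i, z i = (1 + Sg * S)⁻¹ *ᵥ β i -
      (N : ℝ)⁻¹ • (((1 + Sg * S)⁻¹ * (K * S) * (1 + Sg * S + K * S)⁻¹) *ᵥ ∑ j, β j) := by
  rcases Nat.eq_zero_or_pos N with hN | hN
  · subst hN; exact fun i => i.elim0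
  have hNne : (N : ℝ) ≠ 0 := Nat.cast_ne_zero.mpr hN.ne'
  have hAd : IsUnit (1 + Sg * S).det := (Matrix.isUnit_iff_isUnit_det _).mp h₁
  have hBd : IsUnit (1 + Sg * S + K * S).det := (Matrix.isUnit_iff_isUnit_det _).mp h₂
  have msum : ∀ M : Matrix (Fin n) (Fin n) ℝ, ∑ j, M *ᵥ z j = M *ᵥ ∑ j, z j := by
    intro M
    exact (map_sum (M.mulVecLin) z Finset.univ).symm
  have hsum : (∑ j, β j) = (1 + Sg * S + K * S) *ᵥ ∑ j, z j := by
    calc ∑ j, β j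
        = ∑ j : Fin N, ((1 + Sg * S) *ᵥ z j + ((N : ℝ)⁻¹ • K) *ᵥ (S *ᵥ ∑ j, z j)) := by
          exact Finset.sum_congr rfl fun j _ => h j
      _ = (1 + Sg * S) *ᵥ ∑ j, z j + (N : ℝ) • (((N : ℝ)⁻¹ • K) *ᵥ (S *ᵥ ∑ j, z j)) := by
          rw [Finset.sum_add_distrib, Finset.sum_const, Finset.card_univ, Fintype.card_fin,
            msum, ← Nat.cast_smul_eq_nsmul ℝ]
      _ = (1 + Sg * S + K * S) *ᵥ ∑ j, z j := by
          rw [Matrix.smul_mulVec, smul_smul, mul_inv_cancel₀ hNne, one_smul]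
          simp [Matrix.add_mulVec, Matrix.mulVec_mulVec]
  intro i
  have e1 : (1 + Sg * S)⁻¹ *ᵥ ((1 + Sg * S) *ᵥ z i) = z i := by
    rw [Matrix.mulVec_mulVec, Matrix.nonsing_inv_mul _ hAd, Matrix.one_mulVec]
  have e2 : (1 + Sg * S)⁻¹ *ᵥ (((N : ℝ)⁻¹ • K) *ᵥ (S *ᵥ ∑ j, z j)) =
      (N : ℝ)⁻¹ • (((1 + Sg * S)⁻¹ * (K * S)) *ᵥ ∑ j, z j) := by
    rw [Matrix.smul_mulVec, Matrix.mulVec_smul, Matrix.mulVec_mulVec,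
      Matrix.mulVec_mulVec, Matrix.mul_assoc]
  have e3 : ((1 + Sg * S)⁻¹ * (K * S) * (1 + Sg * S + K * S)⁻¹) *ᵥ
      ((1 + Sg * S + K * S) *ᵥ ∑ j, z j) = ((1 + Sg * S)⁻¹ * (K * S)) *ᵥ ∑ j, z j := by
    rw [Matrix.mulVec_mulVec, Matrix.mul_assoc ((1 + Sg * S)⁻¹ * (K * S)),
      Matrix.nonsing_inv_mul _ hBd, Matrix.mul_one]
  rw [h i, hsum, Matrix.mulVec_add, e1, e2, e3]
  abel
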